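/- Let X be a Markov chain on a finite state space, y a state, and let f be the moving target that sits at a state w ≠ y for the first 2 time steps and at y thereafter (f(1) = f(2) = w, f(t) = y for t ≥ 3, with f(0) ∉ {X_0}). Suppose the walk cannot be at w at times 1 or 2 when started from x (e.g. w is at graph distance > 2 from x). Then E_x[τ_f] − E_x[τ_y] ≥ E_x[(τ_f − τ_y)·1(τ_y ≤ 2)] ≥ P_x(τ_y ≤ 2) · min over z of E_z[τ'], where τ' is the additional time after an early hit of y needed to catch the target; in particular, if P_x(τ_y ≤ 2) > 0 then E_x[τ_f] > E_x[τ_y]. -/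

import Mathlib

open scoped ENNReal

/-- `surv P x A t y`: probability that the chain started at `x` has avoided the moving
target `(A s)` at all times `s ≤ t` and is at `y` at time `t`. -/
noncomputable def surv {S : Type*} [Fintype S] [DecidableEq S]
    (P : Matrix S S ℝ≥0∞) (x : S) (A : ℕ → Finset S) : ℕ → S → ℝ≥0∞
  | 0 => fun y => if y = x ∧ y ∉ A 0 then 1 else 0
  | t + 1 => fun y => if y ∈ A (t + 1) then 0 else ∑ z, surv P x A t z * P z y

/-- Expected hitting time `E_x[τ_A]` of the moving target `(A s)`. -/
noncomputable def ehit {S : Type*} [Fintype S] [DecidableEq S]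
    (P : Matrix S S ℝ≥0∞) (x : S) (A : ℕ → Finset S) : ℝ≥0∞ :=
  ∑' t : ℕ, ∑ y, surv P x A t y

/-!
Up to time 2 the moving target sits where the walk cannot be, so avoiding it removes no mass,
while from time 3 on it coincides with the stationary target `y`. Hence, state by state and
time by time, the walk killed at `y` is dominated by the walk killed at the moving target, and
at time 2 the total masses are `P_x(τ_y > 2) < 1 = P_x(τ_f > 2)`. Irreducibility makes the
survival probabilities at `y` decay geometrically, so `E_x[τ_y] < ∞`, and the strict
inequality of one summand passes to the expectations.
-/

open Finset Matrix

theorem tsum_ne_top_of_antitone_of_le_pow {a : ℕ → ℝ≥0∞} (ha : Antitone a) {N : ℕ}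
    (hN : 0 < N) {q : ℝ≥0∞} (hq : q < 1) (h : ∀ m, a (N * m) ≤ q ^ m) : ∑' t, a t ≠ ⊤ := by
  have : NeZero N := ⟨hN.ne'⟩
  have hblock : ∀ t, a t ≤ q ^ (t / N) := fun t =>
    (ha (Nat.mul_div_le t N)).trans (h _)
  have hsum : ∑' t, q ^ (t / N) = N * (1 - q)⁻¹ := by
    rw [← (Nat.divModEquiv N).symm.tsum_eq]
    have hdiv : ∀ c : ℕ × Fin N, (c.1 * N + c.2) / N = c.1 := fun c => by
      rw [add_comm, Nat.add_mul_div_right _ _ hN, Nat.div_eq_of_lt c.2.isLt, zero_add]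
    simp only [Nat.divModEquiv_symm_apply, hdiv]
    rw [ENNReal.tsum_prod (f := fun m (_ : Fin N) => q ^ m)]
    simp [ENNReal.tsum_mul_left, ENNReal.tsum_geometric]
  refine ne_top_of_le_ne_top ?_ ((ENNReal.tsum_le_tsum hblock).trans_eq hsum)
  exact ENNReal.mul_ne_top (ENNReal.natCast_ne_top N) (ENNReal.inv_ne_top.2 (tsub_pos_of_lt hq).ne')

section Survival

variable {S : Type*} [Fintype S] [DecidableEq S] {P : Matrix S S ℝ≥0∞}

theorem surv_eq_zero_of_mem {x : S} {A : ℕ → Finset S} {t : ℕ} {v : S} (hv : v ∈ A t) :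
    surv P x A t v = 0 := by
  cases t <;> simp [surv, hv]

theorem surv_succ_le (x : S) (A : ℕ → Finset S) (t : ℕ) (v : S) :
    surv P x A (t + 1) v ≤ ∑ z, surv P x A t z * P z v := by
  simp only [surv]
  split <;> simp

theorem surv_le_pow_apply (x : S) (A : ℕ → Finset S) (t : ℕ) (v : S) :
    surv P x A t v ≤ (P ^ t) x v := by
  induction t generalizing v with
  | zero =>
    simp only [surv, pow_zero, one_apply]
    split_ifs <;> simp_all
  | succ t ih =>
    calc surv P x A (t + 1) v ≤ ∑ z, surv P x A t z * P z v := surv_succ_le x A t v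
      _ ≤ ∑ z, (P ^ t) x z * P z v := by gcongr with z; exact ih z
      _ = (P ^ (t + 1)) x v := by rw [pow_succ, mul_apply]

theorem surv_eq_pow_apply_of_unreachable {x : S} {A : ℕ → Finset S} {t : ℕ}
    (hA : ∀ s ≤ t, ∀ v ∈ A s, (P ^ s) x v = 0) (v : S) :
    surv P x A t v = (P ^ t) x v := by
  induction t generalizing v with
  | zero =>
    by_cases hv : v ∈ A 0
    · rw [surv_eq_zero_of_mem hv, hA 0 le_rfl v hv]
    · simp [surv, hv, one_apply, eq_comm]
  | succ t ih =>
    by_cases hv : v ∈ A (t + 1)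
    · rw [surv_eq_zero_of_mem hv, hA (t + 1) le_rfl v hv]
    · simp only [surv, hv, if_false, ih fun s hs => hA s (hs.trans t.le_succ)]
      rw [pow_succ, mul_apply]

theorem sum_sum_mul_of_mem_rowStochastic (hP : P ∈ rowStochastic ℝ≥0∞ S) (g : S → ℝ≥0∞) :
    ∑ v, ∑ z, g z * P z v = ∑ z, g z := by
  rw [sum_comm]
  simp [← mul_sum, sum_row_of_mem_rowStochastic hP]

theorem sum_surv_eq_one_of_unreachable (hP : P ∈ rowStochastic ℝ≥0∞ S) {x : S}
    {A : ℕ → Finset S} {t : ℕ} (hA : ∀ s ≤ t, ∀ v ∈ A s, (P ^ s) x v = 0) :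
    ∑ v, surv P x A t v = 1 := by
  simp only [surv_eq_pow_apply_of_unreachable hA]
  exact sum_row_of_mem_rowStochastic (pow_mem hP t) x

theorem sum_surv_le_one (hP : P ∈ rowStochastic ℝ≥0∞ S) (x : S) (A : ℕ → Finset S) (t : ℕ) :
    ∑ v, surv P x A t v ≤ 1 :=
  (sum_le_sum fun v _ => surv_le_pow_apply x A t v).trans_eq
    (sum_row_of_mem_rowStochastic (pow_mem hP t) x)

theorem antitone_sum_surv (hP : P ∈ rowStochastic ℝ≥0∞ S) (x : S) (A : ℕ → Finset S) :
    Antitone fun t => ∑ v, surv P x A t v :=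
  antitone_nat_of_succ_le fun t =>
    (sum_le_sum fun v _ => surv_succ_le x A t v).trans (sum_sum_mul_of_mem_rowStochastic hP _).le

theorem surv_le_surv {x : S} {A B : ℕ → Finset S}
    (hB : ∀ t, ∀ v ∈ B t, surv P x A t v = 0) (t : ℕ) (v : S) :
    surv P x A t v ≤ surv P x B t v := by
  by_cases hv : v ∈ B t
  · simp [hB t v hv]
  induction t generalizing v with
  | zero =>
    simp only [surv, hv, not_false_eq_true, and_true]
    split_ifs <;> simp_all
  | succ t ih =>
    calc surv P x A (t + 1) v ≤ ∑ z, surv P x A t z * P z v := surv_succ_le x A t v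
      _ ≤ ∑ z, surv P x B t z * P z v := by
        gcongr with z
        by_cases hz : z ∈ B t
        · simp [hB t z hz]
        · exact ih z hz
      _ = surv P x B (t + 1) v := by simp [surv, hv]

theorem surv_const_add (x : S) (A : Finset S) (t n : ℕ) (v : S) :
    surv P x (fun _ => A) (t + n) v
      = ∑ z, surv P x (fun _ => A) t z * surv P z (fun _ => A) n v := by
  induction n generalizing v with
  | zero =>
    by_cases hv : v ∈ A
    · simp [surv_eq_zero_of_mem (A := fun _ => A) hv]
    · rw [Nat.add_zero, sum_eq_single v]
      · simp [surv, hv]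
      · intro z _ hz
        simp [surv, Ne.symm hz]
      · simp
  | succ n ih =>
    by_cases hv : v ∈ A
    · simp [surv_eq_zero_of_mem (A := fun _ => A) (t := t + (n + 1)) hv,
        surv_eq_zero_of_mem (A := fun _ => A) (t := n + 1) hv]
    · rw [← add_assoc]
      simp only [surv, hv, if_false]
      simp_rw [ih, sum_mul, mul_sum, mul_assoc]
      exact sum_comm

theorem sum_surv_const_lt_one (hP : P ∈ rowStochastic ℝ≥0∞ S) {A : Finset S} {y z : S}
    (hy : y ∈ A) {k : ℕ} (hk : 0 < (P ^ k) z y) :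
    ∑ v, surv P z (fun _ => A) k v < 1 := by
  have hrow := sum_row_of_mem_rowStochastic (pow_mem hP k) z
  rw [← add_sum_erase _ _ (mem_univ y)] at hrow
  have hrest : ∑ v ∈ univ.erase y, (P ^ k) z v ≠ ⊤ :=
    ne_top_of_le_ne_top ENNReal.one_ne_top (hrow ▸ le_add_self)
  calc ∑ v, surv P z (fun _ => A) k v
      = ∑ v ∈ univ.erase y, surv P z (fun _ => A) k v :=
        (sum_erase _ (surv_eq_zero_of_mem (A := fun _ => A) hy)).symm
    _ ≤ ∑ v ∈ univ.erase y, (P ^ k) z v := sum_le_sum fun v _ => surv_le_pow_apply z _ k v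
    _ < ∑ v ∈ univ.erase y, (P ^ k) z v + (P ^ k) z y := ENNReal.lt_add_right hrest hk.ne'
    _ = 1 := by rw [add_comm, hrow]

theorem sum_surv_const_add_le {A : Finset S} {n : ℕ} {q : ℝ≥0∞}
    (hq : ∀ z, ∑ v, surv P z (fun _ => A) n v ≤ q) (x : S) (t : ℕ) :
    ∑ v, surv P x (fun _ => A) (t + n) v ≤ q * ∑ v, surv P x (fun _ => A) t v :=
  calc ∑ v, surv P x (fun _ => A) (t + n) v
      = ∑ z, surv P x (fun _ => A) t z * ∑ v, surv P z (fun _ => A) n v := by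
        simp_rw [surv_const_add x A t n, mul_sum]
        exact sum_comm
    _ ≤ ∑ z, surv P x (fun _ => A) t z * q := by gcongr with z; exact hq z
    _ = q * ∑ v, surv P x (fun _ => A) t v := by rw [← sum_mul, mul_comm]

theorem exists_sum_surv_const_le_pow (hP : P ∈ rowStochastic ℝ≥0∞ S) {A : Finset S} {y : S}
    (hy : y ∈ A) (hreach : ∀ z, ∃ k, 0 < (P ^ k) z y) :
    ∃ N > 0, ∃ q < 1, ∀ x m, ∑ v, surv P x (fun _ => A) (N * m) v ≤ q ^ m := by
  choose K hK using hreach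
  set N := univ.sup K + 1
  set q := univ.sup fun z => ∑ v, surv P z (fun _ => A) N v
  have hq : q < 1 := by
    refine (Finset.sup_lt_iff zero_lt_one).2 fun z _ => ?_
    exact (antitone_sum_surv hP z _ (Nat.le_succ_of_le (le_sup (mem_univ z)))).trans_lt
      (sum_surv_const_lt_one hP hy (hK z))
  refine ⟨N, by omega, q, hq, fun x m => ?_⟩
  induction m with
  | zero => simpa using sum_surv_le_one hP x _ 0
  | succ m ih =>
    calc ∑ v, surv P x (fun _ => A) (N * m + N) v
        ≤ q * ∑ v, surv P x (fun _ => A) (N * m) v :=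
          sum_surv_const_add_le
            (fun z => le_sup (f := fun z => ∑ v, surv P z _ N v) (mem_univ z)) x _
      _ ≤ q ^ (m + 1) := by rw [pow_succ']; gcongr

theorem ehit_const_ne_top (hP : P ∈ rowStochastic ℝ≥0∞ S) {A : Finset S} {y : S}
    (hy : y ∈ A) (hreach : ∀ z, ∃ k, 0 < (P ^ k) z y) (x : S) :
    ehit P x (fun _ => A) ≠ ⊤ := by
  obtain ⟨N, hN, q, hq, hdecay⟩ := exists_sum_surv_const_le_pow hP hy hreach
  exact tsum_ne_top_of_antitone_of_le_pow (antitone_sum_surv hP x _) hN hq (hdecay x)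

end Survival

theorem stmt16_general {S : Type*} [Fintype S] [DecidableEq S]
    (P : Matrix S S ℝ≥0∞)
    (hstoch : ∀ a, ∑ b, P a b = 1)
    (hirr : ∀ a b, ∃ k, 0 < (P ^ k) a b)
    (x y w : S) (f : ℕ → S)
    (hf0 : f 0 ≠ x) (hf1 : f 1 = w) (hf2 : f 2 = w)
    (hf3 : ∀ t, 3 ≤ t → f t = y)
    (hcant1 : P x w = 0) (hcant2 : (P * P) x w = 0)
    (hhit : ∑ z, surv P x (fun _ => ({y} : Finset S)) 2 z < 1) :
    ehit P x (fun _ => ({y} : Finset S)) < ehit P x fun t => {f t} := by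
  have hP : P ∈ rowStochastic ℝ≥0∞ S :=
    mem_rowStochastic_iff_sum.2 ⟨fun _ _ => zero_le, hstoch⟩
  have hhidden : ∀ s ≤ 2, ∀ v ∈ ({f s} : Finset S), (P ^ s) x v = 0 := by
    intro s hs v hv
    rw [mem_singleton.1 hv]
    interval_cases s
    · simp [one_apply, Ne.symm hf0]
    · simpa [hf1] using hcant1
    · simpa [hf2, sq] using hcant2
  have hdom : ∀ t v, surv P x (fun _ => {y}) t v ≤ surv P x (fun t => {f t}) t v := by
    refine surv_le_surv fun t v hv => ?_
    by_cases ht : t ≤ 2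
    · exact nonpos_iff_eq_zero.1 ((surv_le_pow_apply x _ t v).trans_eq (hhidden t ht v hv))
    · exact surv_eq_zero_of_mem (by simpa [hf3 t (by omega)] using hv)
  have hescape : ∑ v, surv P x (fun t => {f t}) 2 v = 1 :=
    sum_surv_eq_one_of_unreachable hP hhidden
  exact ENNReal.tsum_lt_tsum (ehit_const_ne_top hP (mem_singleton_self y) (fun z => hirr z y) x)
    (fun t => sum_le_sum fun v _ => hdom t v) (hhit.trans_eq hescape.symm)

/-- If the target hides at `w` (unreachable in ≤ 2 steps from `x`) for the first two time
steps and then sits at `y`, and the walk has positive probability of hitting `y` within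
two steps, then the capture time of the moving target strictly exceeds that of the
stationary target at `y` in expectation. -/
theorem stmt16 {S : Type*} [Fintype S] [DecidableEq S]
    (P : Matrix S S ℝ≥0∞)
    (hstoch : ∀ a, ∑ b, P a b = 1)
    (hirr : ∀ a b, ∃ k, 0 < (P ^ k) a b)
    (x y w : S) (hwy : w ≠ y) (f : ℕ → S)
    (hf0 : f 0 ≠ x) (hf1 : f 1 = w) (hf2 : f 2 = w)
    (hf3 : ∀ t, 3 ≤ t → f t = y)
    (hcant1 : P x w = 0) (hcant2 : (P * P) x w = 0)
    (hhit : ∑ z, surv P x (fun _ => ({y} : Finset S)) 2 z < 1) :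
    ehit P x (fun _ => ({y} : Finset S)) < ehit P x fun t => {f t} :=
  stmt16_general P hstoch hirr x y w f hf0 hf1 hf2 hf3 hcant1 hcant2 hhit
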